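/- For any family {G_N} of weighted undirected graphs with uniformly bounded nodal degrees (at most q neighbors each) and edge weights bounded above by w_max, the smallest grounded-Laplacian eigenvalue tends to zero: λ̄₁(G_N) → 0 as N → ∞. -/

import Mathlib

open Matrix Filter

/-- Sorted (ascending) eigenvalues of a Hermitian matrix. -/
noncomputable def sortedEig {N : ℕ} {L : Matrix (Fin N) (Fin N) ℝ}
    (hL : L.IsHermitian) : Fin N → ℝ :=
  hL.eigenvalues ∘ Tuple.sort hL.eigenvalues

/-- Weighted graph Laplacian. -/
noncomputable def lap {N : ℕ} (w : Fin N → Fin N → ℝ) : Matrix (Fin N) (Fin N) ℝ :=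
  Matrix.of fun i j => if i = j then ∑ k, w i k else - w i j

/-!
The all-ones vector on the ungrounded vertices is a test vector for the Rayleigh quotient of the
grounded Laplacian: since Laplacian rows sum to zero, its quadratic form there equals the total
weight of the edges at the grounded vertex, which is at most `q * wmax`, while its squared norm
is the number `N - 1` of ungrounded vertices. Hence `0 ≤ λ̄₁ ≤ q * wmax / (N - 1)`, the lower
bound because the grounded Laplacian is a principal submatrix of a positive semidefinite matrix.
-/

open Finset

theorem Matrix.IsHermitian.mul_dotProduct_self_le_dotProduct_mulVec {n : Type*} [Fintype n]
    [DecidableEq n] {A : Matrix n n ℝ} (hA : A.IsHermitian) {c : ℝ}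
    (hc : ∀ i, c ≤ hA.eigenvalues i) (x : n → ℝ) : c * (x ⬝ᵥ x) ≤ x ⬝ᵥ A *ᵥ x := by
  have hpsd : (A - algebraMap ℝ _ c).PosSemidef := by
    refine posSemidef_iff_isHermitian_and_spectrum_nonneg.2
      ⟨hA.sub (isHermitian_diagonal_of_self_adjoint _ (by simp [IsSelfAdjoint])), ?_⟩
    rw [← spectrum.sub_singleton_eq, hA.spectrum_real_eq_range_eigenvalues]
    rintro _ ⟨_, ⟨i, rfl⟩, _, rfl, rfl⟩
    simpa using hc i
  simpa [Algebra.algebraMap_eq_smul_one, sub_mulVec, smul_mulVec, dotProduct_sub, sub_nonneg] using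
    hpsd.dotProduct_mulVec_nonneg x

theorem sortedEig_zero_le {N : ℕ} {L : Matrix (Fin N) (Fin N) ℝ} (hL : L.IsHermitian)
    (hN : 0 < N) (i : Fin N) : sortedEig hL ⟨0, hN⟩ ≤ hL.eigenvalues i := by
  simpa [sortedEig] using Tuple.monotone_sort hL.eigenvalues
    (show (⟨0, hN⟩ : Fin N) ≤ (Tuple.sort hL.eigenvalues)⁻¹ i from Nat.zero_le _)

theorem Matrix.PosSemidef.sortedEig_nonneg {N : ℕ} {L : Matrix (Fin N) (Fin N) ℝ}
    (hL : L.PosSemidef) (i : Fin N) : 0 ≤ sortedEig hL.isHermitian i :=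
  hL.eigenvalues_nonneg _

section Laplacian

variable {N : ℕ} {w : Fin N → Fin N → ℝ}

theorem sum_lap_apply (w : Fin N → Fin N → ℝ) (i : Fin N) : ∑ j, lap w i j = w i i := by
  simp only [lap, of_apply]
  rw [← Finset.add_sum_erase _ _ (mem_univ i), if_pos rfl,
    Finset.sum_congr rfl fun j hj => if_neg (ne_of_mem_erase hj).symm, sum_neg_distrib,
    ← Finset.add_sum_erase _ _ (mem_univ i)]
  ring

theorem lap_eq_diagonal_sub (hdiag : ∀ i, w i i = 0) :
    lap w = diagonal (fun i => ∑ k, w i k) - of w := by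
  ext i j
  by_cases h : i = j
  · subst h; simp [lap, hdiag]
  · simp [lap, h]

theorem dotProduct_lap_mulVec (hdiag : ∀ i, w i i = 0) (x : Fin N → ℝ) :
    x ⬝ᵥ lap w *ᵥ x = ∑ i, ∑ j, w i j * (x i ^ 2 - x i * x j) := by
  rw [lap_eq_diagonal_sub hdiag, sub_mulVec, dotProduct_sub]
  simp only [dotProduct, mulVec_diagonal]
  simp only [mulVec, dotProduct, of_apply, Finset.sum_mul, Finset.mul_sum,
    ← Finset.sum_sub_distrib]
  exact Finset.sum_congr rfl fun i _ => Finset.sum_congr rfl fun j _ => by ring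

theorem two_mul_dotProduct_lap_mulVec (hsym : ∀ i j, w i j = w j i) (hdiag : ∀ i, w i i = 0)
    (x : Fin N → ℝ) : 2 * (x ⬝ᵥ lap w *ᵥ x) = ∑ i, ∑ j, w i j * (x i - x j) ^ 2 := by
  have hswap : ∑ i, ∑ j, w i j * (x i ^ 2 - x i * x j)
      = ∑ i, ∑ j, w i j * (x j ^ 2 - x i * x j) := by
    rw [Finset.sum_comm]
    simp_rw [hsym, mul_comm (x _) (x _)]
  rw [two_mul, dotProduct_lap_mulVec hdiag]
  nth_rw 2 [hswap]
  rw [← Finset.sum_add_distrib]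
  refine Finset.sum_congr rfl fun i _ => ?_
  rw [← Finset.sum_add_distrib]
  exact Finset.sum_congr rfl fun j _ => by ring

theorem isHermitian_lap (hsym : ∀ i j, w i j = w j i) : (lap w).IsHermitian := by
  refine IsHermitian.ext fun i j => ?_
  by_cases h : i = j
  · simp [lap, h]
  · simp [lap, h, Ne.symm h, hsym i j]

theorem lap_posSemidef (hsym : ∀ i j, w i j = w j i) (hnn : ∀ i j, 0 ≤ w i j)
    (hdiag : ∀ i, w i i = 0) : (lap w).PosSemidef := by
  refine PosSemidef.of_dotProduct_mulVec_nonneg (isHermitian_lap hsym) fun x => ?_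
  have hsq : 0 ≤ ∑ i, ∑ j, w i j * (x i - x j) ^ 2 :=
    sum_nonneg fun i _ => sum_nonneg fun j _ => mul_nonneg (hnn i j) (sq_nonneg _)
  rw [← two_mul_dotProduct_lap_mulVec hsym hdiag] at hsq
  simpa using hsq

end Laplacian

section Grounded

variable {N : ℕ} {w : Fin (N + 1) → Fin (N + 1) → ℝ}

theorem one_dotProduct_grounded_lap_mulVec_one (hdiag : ∀ i, w i i = 0) :
    1 ⬝ᵥ (lap w).submatrix Fin.succ Fin.succ *ᵥ 1 = ∑ i : Fin N, w i.succ 0 := by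
  simp only [one_dotProduct, mulVec, dotProduct_one, submatrix_apply]
  refine Finset.sum_congr rfl fun i _ => ?_
  have hcol : lap w i.succ 0 = -w i.succ 0 := by simp [lap, Fin.succ_ne_zero]
  have hrow := sum_lap_apply w i.succ
  rw [Fin.sum_univ_succ, hdiag, hcol] at hrow
  linarith

theorem sortedEig_grounded_lap_nonneg (hsym : ∀ i j, w i j = w j i) (hnn : ∀ i j, 0 ≤ w i j)
    (hdiag : ∀ i, w i i = 0) (hH : ((lap w).submatrix Fin.succ Fin.succ).IsHermitian)
    (i : Fin N) : 0 ≤ sortedEig hH i :=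
  ((lap_posSemidef hsym hnn hdiag).submatrix Fin.succ).sortedEig_nonneg i

theorem sortedEig_grounded_lap_le (hsym : ∀ i j, w i j = w j i) (hdiag : ∀ i, w i i = 0)
    (hH : ((lap w).submatrix Fin.succ Fin.succ).IsHermitian) (hN : 0 < N) :
    sortedEig hH ⟨0, hN⟩ ≤ (∑ j, w 0 j) / N := by
  have hray := hH.mul_dotProduct_self_le_dotProduct_mulVec (sortedEig_zero_le hH hN) 1
  rw [one_dotProduct_grounded_lap_mulVec_one hdiag, one_dotProduct_one] at hray
  rw [le_div_iff₀ (by exact_mod_cast hN), Fin.sum_univ_succ, hdiag, zero_add]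
  simpa [mul_comm, hsym 0] using hray

end Grounded

theorem sum_le_card_ne_zero_mul {ι : Type*} [Fintype ι] {f : ι → ℝ} {c : ℝ}
    (hf : ∀ i, f i ≤ c) : ∑ i, f i ≤ #{i | f i ≠ 0} * c := by
  rw [← Finset.sum_filter_ne_zero]
  simpa using Finset.sum_le_card_nsmul _ _ c fun i _ => hf i

/-- For any family of weighted undirected graphs (on m n + 1 vertices, with
vertex 0 grounded) with uniformly bounded degrees (at most q) and edge weights
at most w_max, the smallest grounded-Laplacian eigenvalue tends to zero as the
network size tends to infinity. -/
theorem stmt6 (q : ℕ) (wmax : ℝ)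
    (m : ℕ → ℕ) (hm : ∀ n, 1 ≤ m n)
    (hmTop : Tendsto m atTop atTop)
    (w : ∀ n, Fin (m n + 1) → Fin (m n + 1) → ℝ)
    (hsym : ∀ n i j, w n i j = w n j i) (hnn : ∀ n i j, 0 ≤ w n i j)
    (hdiag : ∀ n i, w n i i = 0)
    (hwmax : ∀ n i j, w n i j ≤ wmax)
    (hdeg : ∀ n i, (Finset.univ.filter fun j => w n i j ≠ 0).card ≤ q)
    (hH : ∀ n, ((lap (w n)).submatrix Fin.succ Fin.succ).IsHermitian) :
    Tendsto (fun n => sortedEig (hH n) ⟨0, hm n⟩) atTop (nhds 0) := by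
  have hwmax_nonneg : 0 ≤ wmax := hdiag 0 0 ▸ hwmax 0 0 0
  have hweight n : ∑ j, w n 0 j ≤ q * wmax :=
    (sum_le_card_ne_zero_mul (hwmax n 0)).trans
      (mul_le_mul_of_nonneg_right (by exact_mod_cast hdeg n 0) hwmax_nonneg)
  have hupper n : sortedEig (hH n) ⟨0, hm n⟩ ≤ q * wmax / m n :=
    (sortedEig_grounded_lap_le (hsym n) (hdiag n) (hH n) (hm n)).trans
      (div_le_div_of_nonneg_right (hweight n) (Nat.cast_nonneg _))
  refine tendsto_of_tendsto_of_tendsto_of_le_of_le tendsto_const_nhds ?_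
    (fun n => sortedEig_grounded_lap_nonneg (hsym n) (hnn n) (hdiag n) (hH n) _) hupper
  exact tendsto_const_nhds.div_atTop (tendsto_natCast_atTop_atTop.comp hmTop)
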